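/- arXiv:math/9402212 — 2 statements merged into one kernel-verified Lean document; each statement's English description precedes it below -/
import Mathlib

section
/- The Askey-Wilson divided difference operator D_q satisfies D_q Ψ_n = 2 q^{(1−n)/2} · (1−q^n)/(1−q) · Ψ_{n−1} for all n ≥ 1, where Ψ_n(cos θ) = i^n (i q^{(1−n)/2} e^{iθ};q)_n (i q^{(1−n)/2} e^{−iθ};q)_n. -/
noncomputable section

open Complex

def qPochC (a p : ℂ) (n : ℕ) : ℂ := ∏ j ∈ Finset.range n, (1 - a * p ^ j)

/-- `g_n(z) = i^n ∏_{j<n}(1 - i q^{(1-n)/2} z q^j) ∏_{j<n}(1 - i q^{(1-n)/2} z⁻¹ q^j)`,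
so that `Ψ_n(cos θ) = g_n(e^{iθ})`.  Here `q^{(1-n)/2} = (√q)^{1-n}`. -/
def gPsi (q : ℝ) (n : ℕ) (z : ℂ) : ℂ :=
  I ^ n * qPochC (I * ((Real.sqrt q : ℂ) ^ (1 - (n : ℤ))) * z) (q : ℂ) n *
    qPochC (I * ((Real.sqrt q : ℂ) ^ (1 - (n : ℤ))) * z⁻¹) (q : ℂ) n

/-!
Passing from `Ψ_{n-1}` to `Ψ_n` shifts the base point `i q^{(2-n)/2}` of both `q`-Pochhammer
symbols by `q^{-1/2}`. Hence `g_n(q^{1/2} z)` is `g_{n-1}(z)` times one extra factor at each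
end of the two products; by the symmetry `g_n(z⁻¹) = g_n(z)`, `g_n(q^{-1/2} z)` is
`g_{n-1}(z)` times the two complementary end factors. The difference of the extra factors is
`(z - z⁻¹)(q^{n/2} - q^{-n/2})`, and dividing by `δ_q x = (q^{1/2} - q^{-1/2})(z - z⁻¹)/2`
leaves the symmetric `q`-number
`(q^{n/2} - q^{-n/2}) / (q^{1/2} - q^{-1/2}) = q^{(1-n)/2} (1 - q^n) / (1 - q)`.
-/

theorem qPochC_succ (a p : ℂ) (n : ℕ) :
    qPochC a p (n + 1) = qPochC a p n * (1 - a * p ^ n) :=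
  Finset.prod_range_succ _ _

theorem qPochC_div_succ {p : ℂ} (hp : p ≠ 0) (a : ℂ) (n : ℕ) :
    qPochC (a / p) p (n + 1) = (1 - a / p) * qPochC a p n := by
  rw [qPochC, Finset.prod_range_succ', mul_comm, pow_zero, mul_one]
  congr 1
  refine Finset.prod_congr rfl fun j _ => ?_
  rw [pow_succ]
  field_simp

section

variable {K : Type*} [Field K] {s : K}

theorem zpow_one_sub_natCast_succ (hs : s ≠ 0) (m : ℕ) :
    s ^ (1 - ((m + 1 : ℕ) : ℤ)) = s ^ (1 - (m : ℤ)) * s⁻¹ := by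
  rw [← zpow_sub_one₀ hs]
  push_cast
  ring_nf

theorem zpow_one_sub_natCast_mul_sq_pow (hs : s ≠ 0) (m : ℕ) :
    s ^ (1 - (m : ℤ)) * (s ^ 2) ^ m = s ^ (m + 1) := by
  rw [← pow_mul, ← zpow_natCast, ← zpow_natCast, ← zpow_add₀ hs]
  push_cast
  ring_nf

theorem zpow_one_sub_natCast_div_sq (hs : s ≠ 0) (m : ℕ) :
    s ^ (1 - (m : ℤ)) / s ^ 2 = (s ^ (m + 1))⁻¹ := by
  rw [← zpow_natCast, ← zpow_natCast, ← zpow_neg, ← zpow_sub₀ hs]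
  push_cast
  ring_nf

theorem pow_succ_sub_inv_div_sub_inv (hs : s ≠ 0) (hs1 : s ^ 2 ≠ 1) (m : ℕ) :
    (s ^ (m + 1) - (s ^ (m + 1))⁻¹) / (s - s⁻¹) =
      s ^ (1 - ((m + 1 : ℕ) : ℤ)) * (1 - (s ^ 2) ^ (m + 1)) / (1 - s ^ 2) := by
  rw [show 1 - ((m + 1 : ℕ) : ℤ) = -m by omega, zpow_neg, zpow_natCast]
  field_simp [sub_ne_zero.mpr hs1, sub_ne_zero.mpr hs1.symm]
  ring

end

theorem ofReal_sqrt_ne_zero {q : ℝ} (hq : 0 < q) : (Real.sqrt q : ℂ) ≠ 0 :=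
  ofReal_ne_zero.mpr (Real.sqrt_pos.mpr hq).ne'

theorem ofReal_sqrt_sq {q : ℝ} (hq : 0 ≤ q) : (Real.sqrt q : ℂ) ^ 2 = q := by
  rw [← ofReal_pow, Real.sq_sqrt hq]

theorem gPsi_inv (q : ℝ) (n : ℕ) (z : ℂ) : gPsi q n z⁻¹ = gPsi q n z := by
  simp only [gPsi, inv_inv]
  ring

theorem gPsi_succ_sqrt_mul (q : ℝ) (hq : 0 < q) (m : ℕ) (z : ℂ) :
    gPsi q (m + 1) ((Real.sqrt q : ℂ) * z) =
      I * (1 - I * z * (Real.sqrt q : ℂ) ^ (m + 1)) *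
        (1 - I * z⁻¹ * ((Real.sqrt q : ℂ) ^ (m + 1))⁻¹) * gPsi q m z := by
  have hs := ofReal_sqrt_ne_zero hq
  have hsq := ofReal_sqrt_sq hq.le
  simp only [gPsi]
  set s : ℂ := (Real.sqrt q : ℂ)
  have arg : I * s ^ (1 - ((m + 1 : ℕ) : ℤ)) * (s * z) = I * s ^ (1 - (m : ℤ)) * z := by
    rw [zpow_one_sub_natCast_succ hs]; field_simp
  have arg_inv : I * s ^ (1 - ((m + 1 : ℕ) : ℤ)) * (s * z)⁻¹ =
      I * s ^ (1 - (m : ℤ)) * z⁻¹ / s ^ 2 := by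
    rw [zpow_one_sub_natCast_succ hs]; field_simp
  rw [arg, arg_inv, ← hsq, qPochC_succ, qPochC_div_succ (pow_ne_zero 2 hs),
    ← zpow_one_sub_natCast_div_sq hs m, ← zpow_one_sub_natCast_mul_sq_pow hs m]
  ring

theorem gPsi_succ_sqrt_mul_sub (q : ℝ) (hq : 0 < q) (m : ℕ) (z : ℂ) :
    gPsi q (m + 1) ((Real.sqrt q : ℂ) * z) - gPsi q (m + 1) ((Real.sqrt q : ℂ)⁻¹ * z) =
      (z - z⁻¹) * ((Real.sqrt q : ℂ) ^ (m + 1) - ((Real.sqrt q : ℂ) ^ (m + 1))⁻¹) *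
        gPsi q m z := by
  rw [← gPsi_inv q (m + 1) ((Real.sqrt q : ℂ)⁻¹ * z), mul_inv, inv_inv, gPsi_succ_sqrt_mul q hq,
    gPsi_succ_sqrt_mul q hq, gPsi_inv, inv_inv]
  linear_combination (-(z - z⁻¹) * ((Real.sqrt q : ℂ) ^ (m + 1) -
    ((Real.sqrt q : ℂ) ^ (m + 1))⁻¹) * gPsi q m z) * I_sq

/-- The Askey–Wilson divided-difference rule `D_q Ψ_n = 2 q^{(1-n)/2} (1-q^n)/(1-q) Ψ_{n-1}`,
stated at `x = cos θ`, `z = e^{iθ}` with `e^{iθ} ≠ e^{-iθ}`. -/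
theorem askeyWilson_Psi (q : ℝ) (hq0 : 0 < q) (hq1 : q < 1) (n : ℕ) (hn : 1 ≤ n)
    (θ : ℝ) (hz : Complex.exp (θ * I) - Complex.exp (-θ * I) ≠ 0) :
    (gPsi q n ((Real.sqrt q : ℂ) * Complex.exp (θ * I)) -
        gPsi q n (((Real.sqrt q : ℂ))⁻¹ * Complex.exp (θ * I))) /
      (((Real.sqrt q : ℂ) - ((Real.sqrt q : ℂ))⁻¹) *
        (Complex.exp (θ * I) - Complex.exp (-θ * I)) / 2) =
      2 * ((Real.sqrt q : ℂ) ^ (1 - (n : ℤ))) * (1 - (q : ℂ) ^ n) / (1 - (q : ℂ)) *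
        gPsi q (n - 1) (Complex.exp (θ * I)) := by
  obtain ⟨m, rfl⟩ : ∃ m, n = m + 1 := ⟨n - 1, by omega⟩
  have hs := ofReal_sqrt_ne_zero hq0
  have hsq := ofReal_sqrt_sq hq0.le
  have hs1 : (Real.sqrt q : ℂ) ^ 2 ≠ 1 := by
    rw [hsq]
    exact_mod_cast hq1.ne
  have hzinv : Complex.exp (-θ * I) = (Complex.exp (θ * I))⁻¹ := by
    rw [← Complex.exp_neg, neg_mul]
  rw [hzinv] at hz ⊢
  rw [Nat.add_sub_cancel, gPsi_succ_sqrt_mul_sub q hq0, ← hsq]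
  calc _ = 2 * (((Real.sqrt q : ℂ) ^ (m + 1) - ((Real.sqrt q : ℂ) ^ (m + 1))⁻¹) /
        ((Real.sqrt q : ℂ) - (Real.sqrt q : ℂ)⁻¹)) * gPsi q m (Complex.exp (θ * I)) := by
        -- makes `z - z⁻¹` an atom, so that `field_simp` cancels it instead of expanding `z⁻¹`
        generalize Complex.exp (θ * I) - (Complex.exp (θ * I))⁻¹ = w at hz ⊢
        field_simp
    _ = _ := by
      rw [pow_succ_sub_inv_div_sub_inv hs hs1]
      ring
end
end

section
/- As an identity of formal power series in t over ℝ[x]: ∏_{j=0}^{∞}(1 − (1−q)²t²q^{2j−1/2}/4) · Σ_{n=0}^{∞} c_n Ψ_n(x) t^n = Σ_{n=0}^{∞} h_n(x|q) t^n, where c_n = (1−q)^n q^{n(n−1)/4} / (2^n (q;q)_n), h_n(x|q) = c_n H_n(x|q), Ψ_n are defined by Ψ_0 = 1, Ψ_1 = 2x, Ψ_{n+2} = (4x² − (1−q^{n+1})(1−q^{−n−1}))Ψ_n, and H_n are the q-Hermite polynomials. -/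
/-!
Write `G = Σ h_n tⁿ`, `E = Σ c_n Ψ_n tⁿ`, `P = Σ A_m tᵐ` and `a = (1-q)²/(4√q)`.
The product satisfies `P(t) = (1 - a t²) P(qt)`, the recurrence of `Ψ_n` is a second-order
q-difference equation for `E`, and the three-term recurrence of `H_n` is a first-order equation for
`G` that also involves `G(√q t)`. Eliminating `G(√q t)` shows that `G` and `E P` both solve
`q F(t) - (1 + q + (4x²-2)aq²t²) F(qt) + (1 - aq²t²)(1 - aq³t²) F(q²t) = 0`.
In degree `m ≥ 2` the left side is `q(1 - q^(m-1))(1 - q^m) f_m` plus terms in `f_(m-2)` and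
`f_(m-4)`, so a solution is determined by `f_0` and `f_1`.
-/

noncomputable section

open Polynomial Filter

def qPoch (a p : ℝ) (n : ℕ) : ℝ := ∏ j ∈ Finset.range n, (1 - a * p ^ j)

def qHermite (q : ℝ) : ℕ → ℝ → ℝ
  | 0 => fun _ => 1
  | 1 => fun x => 2 * x
  | (n + 2) => fun x => 2 * x * qHermite q (n + 1) x - (1 - q ^ (n + 1)) * qHermite q n x

def Psi (q : ℝ) : ℕ → ℝ → ℝ
  | 0 => fun _ => 1
  | 1 => fun x => 2 * x
  | (n + 2) => fun x =>
      4 * x ^ 2 * Psi q n x - (1 - q ^ (n + 1)) * (1 - q ^ (-(n + 1) : ℤ)) * Psi q n x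

/-- `c_n = (1-q)^n q^{n(n-1)/4} / (2^n (q;q)_n)`, with `q^{n(n-1)/4} = (√q)^{n(n-1)/2}`. -/
def cCoeff (q : ℝ) (n : ℕ) : ℝ :=
  (1 - q) ^ n * Real.sqrt q ^ (n * (n - 1) / 2) / (2 ^ n * qPoch q q n)

def hq (q : ℝ) (n : ℕ) (x : ℝ) : ℝ := cCoeff q n * qHermite q n x

section Coefficients

lemma qPoch_succ (q : ℝ) (n : ℕ) : qPoch q q (n + 1) = qPoch q q n * (1 - q ^ (n + 1)) := by
  rw [qPoch, Finset.prod_range_succ, ← qPoch, pow_succ']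

lemma cCoeff_zero (q : ℝ) : cCoeff q 0 = 1 := by
  simp [cCoeff, qPoch]

variable {q : ℝ}

lemma one_sub_pow_pos (hq0 : 0 ≤ q) (hq1 : q < 1) (n : ℕ) : 0 < 1 - q ^ (n + 1) :=
  sub_pos.mpr (pow_lt_one₀ hq0 hq1 n.succ_ne_zero)

lemma qPoch_pos (hq0 : 0 ≤ q) (hq1 : q < 1) (n : ℕ) : 0 < qPoch q q n := by
  induction n with
  | zero => simp [qPoch]
  | succ n ih => rw [qPoch_succ]; exact mul_pos ih (one_sub_pow_pos hq0 hq1 n)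

lemma cCoeff_one (hq1 : q < 1) : cCoeff q 1 = 1 / 2 := by
  have h : 1 - q ≠ 0 := (sub_pos.mpr hq1).ne'
  simp [cCoeff, qPoch]
  field_simp

lemma cCoeff_succ (hq0 : 0 ≤ q) (hq1 : q < 1) (n : ℕ) :
    2 * (1 - q ^ (n + 1)) * cCoeff q (n + 1) = (1 - q) * Real.sqrt q ^ n * cCoeff q n := by
  have hexp : (n + 1) * (n + 1 - 1) / 2 = n * (n - 1) / 2 + n := by
    rcases n with _ | n
    · rfl
    · simp only [Nat.add_sub_cancel]
      rw [show (n + 1 + 1) * (n + 1) = (n + 1) * n + (n + 1) * 2 by ring,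
        Nat.add_mul_div_right _ _ two_pos]
  have hP := (qPoch_pos hq0 hq1 n).ne'
  have hs : 1 - q ^ n * q ≠ 0 := pow_succ q n ▸ (one_sub_pow_pos hq0 hq1 n).ne'
  rw [cCoeff, cCoeff, qPoch_succ, hexp, pow_add]
  field_simp
  ring

lemma cCoeff_add_two {a : ℝ} (hq0 : 0 ≤ q) (hq1 : q < 1)
    (ha : (1 - q) ^ 2 = 4 * a * Real.sqrt q) (n : ℕ) :
    (1 - q ^ (n + 1)) * (1 - q ^ (n + 2)) * cCoeff q (n + 2) = a * q ^ (n + 1) * cCoeff q n := by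
  have hapow : 4 * a * q ^ (n + 1) = (1 - q) ^ 2 * Real.sqrt q ^ (2 * n + 1) := by
    calc 4 * a * q ^ (n + 1) = 4 * a * (Real.sqrt q ^ 2) ^ (n + 1) := by rw [Real.sq_sqrt hq0]
      _ = (1 - q) ^ 2 * Real.sqrt q ^ (2 * n + 1) := by rw [ha]; ring
  linear_combination (1 - q ^ (n + 1)) / 2 * cCoeff_succ hq0 hq1 (n + 1)
    + (1 - q) * Real.sqrt q ^ (n + 1) / 4 * cCoeff_succ hq0 hq1 n
    - cCoeff q n / 4 * hapow

lemma hq_add_two {a : ℝ} (hq0 : 0 ≤ q) (hq1 : q < 1)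
    (ha : (1 - q) ^ 2 = 4 * a * Real.sqrt q) (n : ℕ) (x : ℝ) :
    (1 - q ^ (n + 2)) * hq q (n + 2) x
      = x * (1 - q) * Real.sqrt q ^ (n + 1) * hq q (n + 1) x - a * q ^ (n + 1) * hq q n x := by
  simp only [hq, qHermite]
  linear_combination x * qHermite q (n + 1) x * cCoeff_succ hq0 hq1 (n + 1)
    - qHermite q n x * cCoeff_add_two hq0 hq1 ha n

lemma Psi_add_two (hq : q ≠ 0) (n : ℕ) (x : ℝ) :
    q ^ (n + 1) * Psi q (n + 2) x
      = (4 * x ^ 2 * q ^ (n + 1) + (1 - q ^ (n + 1)) ^ 2) * Psi q n x := by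
  have hpow : q ^ (-(n + 1) : ℤ) = (q ^ (n + 1))⁻¹ := by
    rw [← zpow_natCast, ← zpow_neg]
    push_cast
    rfl
  simp only [Psi, hpow]
  field_simp
  ring

lemma cCoeff_mul_Psi_add_two {a : ℝ} (hq0 : 0 < q) (hq1 : q < 1)
    (ha : (1 - q) ^ 2 = 4 * a * Real.sqrt q) (n : ℕ) (x : ℝ) :
    (1 - q ^ (n + 1)) * (1 - q ^ (n + 2)) * (cCoeff q (n + 2) * Psi q (n + 2) x)
      = a * (4 * x ^ 2 * q ^ (n + 1) + (1 - q ^ (n + 1)) ^ 2) * (cCoeff q n * Psi q n x) := by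
  linear_combination Psi q (n + 2) x * cCoeff_add_two hq0.le hq1 ha n
    + a * cCoeff q n * Psi_add_two hq0.ne' n x

end Coefficients

namespace PowerSeries

lemma rescale_C {R : Type*} [CommSemiring R] (r a : R) : rescale r (C a) = C a := by
  ext n
  rcases n with _ | n <;> simp [coeff_C]

section QDifference

variable {q : ℝ}

def qDiffOp (q : ℝ) (f : ℝ⟦X⟧) : ℝ⟦X⟧ :=
  C q * f - (1 + C q) * rescale q f + rescale q (rescale q f)

lemma coeff_qDiffOp (q : ℝ) (f : ℝ⟦X⟧) (m : ℕ) :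
    coeff m (qDiffOp q f) = (q - q ^ m) * (1 - q ^ m) * coeff m f := by
  simp only [qDiffOp, map_sub, map_add, add_mul, one_mul, coeff_C_mul, coeff_rescale]
  ring

lemma X_pow_dvd_rescale {R : Type*} [CommRing R] {n : ℕ} {f : R⟦X⟧} (r : R)
    (h : X ^ n ∣ f) : X ^ n ∣ rescale r f := by
  obtain ⟨g, rfl⟩ := h
  rw [map_mul, map_pow, rescale_X, mul_pow, mul_assoc]
  exact (dvd_mul_right _ _).mul_left _

lemma eq_zero_of_qDiffOp_eq (hq0 : 0 < q) (hq1 : q < 1) {D V W : ℝ⟦X⟧} (h2 : X ^ 2 ∣ D)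
    (h : qDiffOp q D = X ^ 2 * (V * rescale q D + W * rescale q (rescale q D))) :
    D = 0 := by
  have hdvd : ∀ k, X ^ (k + 2) ∣ D := by
    intro k
    induction k with
    | zero => simpa using h2
    | succ k ih =>
      refine X_pow_dvd_iff.mpr fun m hm => ?_
      rcases Nat.lt_or_ge m (k + 2) with hlt | hge
      · exact X_pow_dvd_iff.mp ih m hlt
      obtain rfl : m = k + 2 := by omega
      have hrhs : X ^ (k + 2 + 2) ∣ qDiffOp q D := by
        rw [h, pow_add, mul_comm (X ^ (k + 2))]
        exact mul_dvd_mul_left (X ^ 2) (dvd_add (Dvd.dvd.mul_left (X_pow_dvd_rescale q ih) V)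
          (Dvd.dvd.mul_left (X_pow_dvd_rescale q (X_pow_dvd_rescale q ih)) W))
      have hcoeff := X_pow_dvd_iff.mp hrhs (k + 2) (by omega)
      rw [coeff_qDiffOp] at hcoeff
      have hlt : q ^ (k + 2) < q := by
        simpa using pow_lt_pow_right_of_lt_one₀ hq0 hq1 (show 1 < k + 2 by omega)
      have hlt' : q ^ (k + 2) < 1 := pow_lt_one₀ hq0.le hq1 (by omega)
      simpa [(sub_pos.mpr hlt).ne', (sub_pos.mpr hlt').ne'] using hcoeff
  ext m
  simpa using X_pow_dvd_iff.mp (hdvd m) m (by omega)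

end QDifference

lemma coeff_mul_mk {R : Type*} [CommSemiring R] (f : R⟦X⟧) (A : ℕ → R) (n : ℕ) :
    coeff n (f * mk A) = ∑ k ∈ Finset.range (n + 1), A (n - k) * coeff k f := by
  rw [coeff_mul,
    Finset.Nat.sum_antidiagonal_eq_sum_range_succ fun i j => coeff i f * coeff j (mk A)]
  exact Finset.sum_congr rfl fun k _ => by rw [coeff_mk, mul_comm]

section InfiniteProduct

open WithPiTopology

variable {R : Type*} [CommRing R] [TopologicalSpace R] [IsTopologicalRing R] [T2Space R]

lemma mk_eq_mul_rescale_of_tendsto_coeff_prod {c r : R} {A : ℕ → R}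
    (hA : ∀ m, Tendsto (fun N => (∏ j ∈ Finset.range N,
      (1 - Polynomial.C (c * r ^ (2 * j)) * Polynomial.X ^ 2)).coeff m) atTop (nhds (A m))) :
    mk A = (1 - C c * X ^ 2) * rescale r (mk A) := by
  set P : ℕ → R⟦X⟧ := fun N => ∏ j ∈ Finset.range N, (1 - C (c * r ^ (2 * j)) * X ^ 2)
  have hP : Tendsto P atTop (nhds (mk A)) := by
    refine (tendsto_iff_coeff_tendsto R _ _ _).mpr fun m => ?_
    convert hA m using 2 with N
    · rw [← Polynomial.coeff_coe, ← Polynomial.coeToPowerSeries.ringHom_apply,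
        map_prod Polynomial.coeToPowerSeries.ringHom]
      simp [P, Polynomial.coeToPowerSeries.ringHom_apply]
    · rw [coeff_mk]
  have hrescale : Tendsto (fun N => rescale r (P N)) atTop (nhds (rescale r (mk A))) :=
    (tendsto_iff_coeff_tendsto R _ _ _).mpr fun m => by
      simpa only [coeff_rescale] using
        ((tendsto_iff_coeff_tendsto R _ _ _).mp hP m).const_mul (r ^ m)
  have hstep : ∀ N, P (N + 1) = (1 - C c * X ^ 2) * rescale r (P N) := by
    intro N
    simp only [P, Finset.prod_range_succ', map_prod, map_sub, map_one, map_mul, map_pow,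
      rescale_X]
    rw [mul_comm]
    congr 1
    · simp
    · refine Finset.prod_congr rfl fun j _ => ?_
      rw [rescale_C, rescale_C]
      ring
  refine tendsto_nhds_unique (hP.comp (tendsto_add_atTop_nat 1)) ?_
  simpa only [Function.comp_def, hstep] using hrescale.const_mul (1 - C c * X ^ 2)

lemma coeff_one_eq_zero_of_eq_mul_rescale {K : Type*} [CommRing K] [IsDomain K] {c r : K}
    {P : K⟦X⟧} (hr : r ≠ 1) (hP : P = (1 - C c * X ^ 2) * rescale r P) : coeff 1 P = 0 := by
  have h : coeff 1 P = r * coeff 1 P := by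
    simpa [sub_mul, mul_assoc, coeff_X_pow_mul'] using congrArg (coeff 1) hP
  have h' : (1 - r) * coeff 1 P = 0 := by linear_combination h
  exact (mul_eq_zero.mp h').resolve_left (sub_ne_zero.mpr hr.symm)

end InfiniteProduct

section QHermite

variable {q a : ℝ}

def hermiteOp (q a x : ℝ) (f : ℝ⟦X⟧) : ℝ⟦X⟧ :=
  C q * f - (1 + C q + C (a * q ^ 2 * (4 * x ^ 2 - 2)) * X ^ 2) * rescale q f
    + (1 - C (a * q ^ 2) * X ^ 2) * (1 - C (a * q ^ 3) * X ^ 2) * rescale q (rescale q f)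

lemma eq_of_hermiteOp_eq_zero (hq0 : 0 < q) (hq1 : q < 1) {x : ℝ} {f g : ℝ⟦X⟧}
    (hf : hermiteOp q a x f = 0) (hg : hermiteOp q a x g = 0)
    (h0 : coeff 0 f = coeff 0 g) (h1 : coeff 1 f = coeff 1 g) : f = g := by
  rw [← sub_eq_zero]
  refine eq_zero_of_qDiffOp_eq hq0 hq1 (V := C (a * q ^ 2 * (4 * x ^ 2 - 2)))
    (W := C (a * q ^ 2) + C (a * q ^ 3) - C (a * q ^ 2) * C (a * q ^ 3) * X ^ 2) ?_ ?_
  · refine X_pow_dvd_iff.mpr fun m hm => ?_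
    interval_cases m <;> simp only [map_sub, h0, h1, sub_self]
  · simp only [hermiteOp] at hf hg
    simp only [qDiffOp, map_sub]
    linear_combination hf - hg

def psiOp (q a x : ℝ) (f : ℝ⟦X⟧) : ℝ⟦X⟧ :=
  C q * (1 - C a * X ^ 2) * f - (1 + C q + C (a * q ^ 2 * (4 * x ^ 2 - 2)) * X ^ 2) * rescale q f
    + (1 - C (a * q ^ 3) * X ^ 2) * rescale q (rescale q f)

def PsiSeries (q x : ℝ) : ℝ⟦X⟧ := mk fun k => cCoeff q k * Psi q k x

lemma psiOp_PsiSeries (hq0 : 0 < q) (hq1 : q < 1)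
    (ha : (1 - q) ^ 2 = 4 * a * Real.sqrt q) (x : ℝ) : psiOp q a x (PsiSeries q x) = 0 := by
  ext m
  simp only [psiOp, PsiSeries, sub_mul, add_mul, one_mul, mul_assoc, map_sub, map_add, coeff_C_mul,
    coeff_X_pow_mul', coeff_rescale, coeff_mk, map_zero]
  rcases m with _ | _ | m
  · simp [cCoeff_zero, Psi]
  · simp
  · simp only [le_add_iff_nonneg_left, zero_le, if_true, show m + 1 + 1 - 2 = m by omega]
    linear_combination q * cCoeff_mul_Psi_add_two hq0 hq1 ha m x

lemma hermiteOp_mul {x : ℝ} {E P : ℝ⟦X⟧} (hP : P = (1 - C a * X ^ 2) * rescale q P)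
    (hE : psiOp q a x E = 0) : hermiteOp q a x (E * P) = 0 := by
  have hTP : rescale q P = (1 - C (a * q ^ 2) * X ^ 2) * rescale q (rescale q P) := by
    conv_lhs => rw [hP]
    simp only [map_mul, map_sub, map_one, map_pow, rescale_C, rescale_X]
    ring
  simp only [psiOp] at hE
  simp only [hermiteOp, map_mul (rescale q)]
  linear_combination C q * E * hP
    + (C q * (1 - C a * X ^ 2) * E
      - (1 + C q + C (a * q ^ 2 * (4 * x ^ 2 - 2)) * X ^ 2) * rescale q E) * hTP
    + (1 - C (a * q ^ 2) * X ^ 2) * rescale q (rescale q P) * hE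

def hqSeries (q x : ℝ) : ℝ⟦X⟧ := mk fun n => hq q n x

lemma hqSeries_sub_rescale (hq0 : 0 ≤ q) (hq1 : q < 1)
    (ha : (1 - q) ^ 2 = 4 * a * Real.sqrt q) (x : ℝ) :
    hqSeries q x - rescale q (hqSeries q x)
      = X * (C (x * (1 - q)) * rescale (Real.sqrt q) (hqSeries q x))
        - X ^ 2 * (C (a * q) * rescale q (hqSeries q x)) := by
  ext m
  simp only [hqSeries, map_sub, coeff_rescale, coeff_mk, coeff_C_mul, coeff_X_pow_mul']
  rcases m with _ | _ | m
  · simp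
  · simp only [coeff_succ_X_mul, coeff_rescale, coeff_C_mul, coeff_mk, hq, qHermite,
      cCoeff_one hq1, cCoeff_zero]
    norm_num
    ring
  · simp only [coeff_succ_X_mul, coeff_C_mul, coeff_rescale, coeff_mk, le_add_iff_nonneg_left,
      zero_le, if_true, show m + 1 + 1 - 2 = m by omega]
    linear_combination hq_add_two hq0 hq1 ha m x

lemma hermiteOp_hqSeries (hq0 : 0 ≤ q) (hq1 : q < 1)
    (ha : (1 - q) ^ 2 = 4 * a * Real.sqrt q) (x : ℝ) : hermiteOp q a x (hqSeries q x) = 0 := by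
  have h1 := hqSeries_sub_rescale hq0 hq1 ha x
  -- dilating the first-order equation by `√q` and by `q` eliminates `G(√q t)` and `G(q√q t)`
  set s := Real.sqrt q
  have hss : s * s = q := Real.mul_self_sqrt hq0
  have hSS : ∀ f : ℝ⟦X⟧, rescale s (rescale s f) = rescale q f := fun f => by
    rw [rescale_rescale, hss]
  have hST : ∀ f : ℝ⟦X⟧, rescale s (rescale q f) = rescale q (rescale s f) := fun f => by
    rw [rescale_rescale, rescale_rescale, mul_comm]
  have h2 := congrArg (rescale s) h1
  have h3 := congrArg (rescale q) h1
  simp only [map_sub, map_one, map_mul, map_pow, rescale_X, rescale_C, hSS, hST] at h1 h2 h3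
  have hCa : (1 - C q) ^ 2 = 4 * C a * C s := by
    simpa only [map_sub, map_one, map_pow, map_mul, map_ofNat] using congrArg C ha
  have hCs : C s ^ 2 = C q := by
    rw [← map_pow, sq, hss]
  simp only [hermiteOp, map_mul, map_sub, map_pow, map_ofNat]
  linear_combination C q * h1 + C q * C x * (1 - C q) * X * h2
    - (1 - C a * C q * C s ^ 2 * X ^ 2) * h3
    + C q * C x ^ 2 * C s * X ^ 2 * rescale q (hqSeries q x) * hCa
    + C a * C q * X ^ 2 * ((4 * C x ^ 2 - 1) * rescale q (hqSeries q x)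
      + (1 - C a * C q ^ 3 * X ^ 2) * rescale q (rescale q (hqSeries q x))) * hCs

end QHermite

end PowerSeries

/-- The generating-function identity `(t² q^{-1/2}; q²)_∞ E(x;t) = Σ h_n(x|q) t^n`,
stated coefficientwise: if `A_m` is the `m`-th coefficient of the infinite product
`∏_{j≥0} (1 - ((1-q)²/(4√q)) q^{2j} t²)` (as a limit of partial-product coefficients),
then `h_n(x|q) = Σ_{k=0}^n A_{n-k} c_k Ψ_k(x)`. -/
theorem generating_function (q : ℝ) (hq0 : 0 < q) (hq1 : q < 1)
    (A : ℕ → ℝ)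
    (hA : ∀ m : ℕ, Tendsto
      (fun N : ℕ => (∏ j ∈ Finset.range N,
        (1 - C ((1 - q) ^ 2 / (4 * Real.sqrt q) * q ^ (2 * j)) * X ^ 2 :
          Polynomial ℝ)).coeff m)
      atTop (nhds (A m))) :
    ∀ (n : ℕ) (x : ℝ),
      hq q n x = ∑ k ∈ Finset.range (n + 1), A (n - k) * cCoeff q k * Psi q k x := by
  generalize ha_def : (1 - q) ^ 2 / (4 * Real.sqrt q) = a at hA
  have ha : (1 - q) ^ 2 = 4 * a * Real.sqrt q := by
    rw [← ha_def]
    field_simp [(Real.sqrt_pos.2 hq0).ne']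
  have hP := PowerSeries.mk_eq_mul_rescale_of_tendsto_coeff_prod hA
  have hA0 : A 0 = 1 :=
    tendsto_nhds_unique (hA 0) (by simp [Polynomial.coeff_zero_eq_eval_zero, Polynomial.eval_prod])
  have hA1 : A 1 = 0 := by
    simpa using PowerSeries.coeff_one_eq_zero_of_eq_mul_rescale hq1.ne hP
  intro n x
  have hG : PowerSeries.hqSeries q x = PowerSeries.PsiSeries q x * PowerSeries.mk A :=
    PowerSeries.eq_of_hermiteOp_eq_zero hq0 hq1 (PowerSeries.hermiteOp_hqSeries hq0.le hq1 ha x)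
      (PowerSeries.hermiteOp_mul hP (PowerSeries.psiOp_PsiSeries hq0 hq1 ha x))
      (by simp [PowerSeries.hqSeries, PowerSeries.PsiSeries, hq, qHermite, Psi, cCoeff_zero, hA0])
      (by simp [PowerSeries.coeff_mul_mk, Finset.sum_range_succ, PowerSeries.hqSeries,
        PowerSeries.PsiSeries, hq, qHermite, Psi, cCoeff_zero, cCoeff_one hq1, hA0, hA1])
  simpa [PowerSeries.coeff_mul_mk, PowerSeries.hqSeries, PowerSeries.PsiSeries, mul_assoc]
    using congrArg (PowerSeries.coeff n) hG
end
end
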